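/- [ψ'(x)]² + λψ''(x) is nonnegative for all x > 0 if and only if λ ≤ 1; equivalently, inf_{x>0} ( −[ψ'(x)]²/ψ''(x) ) = 1, this infimum being the limit as x → ∞, i.e., lim_{x→∞} −[ψ'(x)]²/ψ''(x) = 1. -/

import Mathlib

open Filter Topology

noncomputable def psi : ℝ → ℝ := deriv (fun x => Real.log (Real.Gamma x))

namespace TG
set_option maxHeartbeats 1000000

noncomputable def trig (x : ℝ) : ℝ := ∑' n : ℕ, 1/(x+n)^2
noncomputable def cub (x : ℝ) : ℝ := ∑' n : ℕ, 1/(x+n)^3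
noncomputable def wg (n : ℕ) (x : ℝ) : ℝ := x/((n:ℝ)+1) - Real.log (1 + x/((n:ℝ)+1))
noncomputable def WW (x : ℝ) : ℝ := ∑' n : ℕ, wg n x
noncomputable def cc : ℝ := WW 1
noncomputable def HH (n : ℕ) : ℝ := ∑ m ∈ Finset.range n, 1/((m:ℝ)+1)
noncomputable def hW (x : ℝ) : ℝ := ∑' n : ℕ, (1/((n:ℝ)+1) - 1/(x+n+1))
variable {x : ℝ}




lemma summable_base (p : ℕ) (hp : 1 < p) : Summable (fun n : ℕ => 1/((n:ℝ)+1)^p) := by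
  have h := (Real.summable_one_div_nat_pow (p := p)).2 hp
  have h2 := (summable_nat_add_iff (f := fun n : ℕ => 1/(n:ℝ)^p) 1).2 h
  refine h2.congr fun n => ?_
  push_cast
  ring

lemma summable_shift {x : ℝ} (hx : 0 < x) (p : ℕ) (hp : 1 < p) :
    Summable (fun n : ℕ => 1/(x+n)^p) := by
  refine Summable.of_nonneg_of_le (fun n => by positivity)
    (fun n => ?_) (((summable_base p hp).mul_left ((1+1/x)^p)))
  have hxn : (0:ℝ) < x + n := by positivity
  have hn1 : (0:ℝ) < (n:ℝ)+1 := by positivity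
  have key : 1/(x+n) ≤ (1+1/x)/((n:ℝ)+1) := by
    rw [div_le_div_iff₀ hxn hn1]
    have h0 : (0:ℝ) ≤ (n:ℝ)/x := by positivity
    have : (1+1/x)*(x+n) = x + (n:ℝ) + 1 + n/x := by field_simp; ring
    nlinarith
  calc 1/(x+n)^p = (1/(x+n))^p := by rw [div_pow, one_pow]
    _ ≤ ((1+1/x)/((n:ℝ)+1))^p := by
        apply pow_le_pow_left₀ (by positivity) key
    _ = (1+1/x)^p * (1/((n:ℝ)+1)^p) := by rw [div_pow]; ring

lemma hasSum_telescope {a : ℕ → ℝ} (h0 : Tendsto a atTop (𝓝 0))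
    (hmono : ∀ n, a (n+1) ≤ a n) (hpos : ∀ n, 0 ≤ a n) :
    HasSum (fun n => a n - a (n+1)) (a 0) := by
  have hsum : Summable (fun n => a n - a (n+1)) :=
    summable_of_sum_range_le (fun n => sub_nonneg.2 (hmono n))
      (fun n => by rw [Finset.sum_range_sub' a n]; linarith [hpos n])
  have h2 : Tendsto (fun n => ∑ i ∈ Finset.range n, (a i - a (i+1))) atTop (𝓝 (a 0)) := by
    simp only [Finset.sum_range_sub' a]
    simpa using tendsto_const_nhds.sub h0
  have := tendsto_nhds_unique h2 hsum.hasSum.tendsto_sum_nat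
  rw [this]
  exact hsum.hasSum

lemma tendsto_add_nat_atTop (x : ℝ) : Tendsto (fun n : ℕ => x + (n:ℝ)) atTop atTop :=
  tendsto_atTop_add_const_left _ x tendsto_natCast_atTop_atTop

lemma tendsto_inv_pow_zero (x : ℝ) (p : ℕ) (hp : 0 < p) :
    Tendsto (fun n : ℕ => 1/(x+(n:ℝ))^p) atTop (𝓝 0) := by
  simp only [one_div]
  exact (((tendsto_pow_atTop hp.ne').comp (tendsto_add_nat_atTop x)).inv_tendsto_atTop)





lemma trig_shift (hx : 0 < x) : trig x = 1/x^2 + trig (x+1) := by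
  rw [trig, Summable.tsum_eq_zero_add (summable_shift hx 2 one_lt_two)]
  congr 1
  · norm_num
  · rw [trig]
    apply tsum_congr
    intro n
    push_cast
    ring_nf





lemma trig_lower (hx : 0 < x) : 1/x + 1/(2*x^2) ≤ trig x := by
  set a : ℕ → ℝ := fun n => 1/(x+n) + 1/(2*(x+n)^2) with ha
  have hxn : ∀ n : ℕ, (0:ℝ) < x + n := fun n => by positivity
  have h0 : Tendsto a atTop (𝓝 0) := by
    have := (tendsto_inv_pow_zero x 1 one_pos).add
      ((tendsto_inv_pow_zero x 2 two_pos).const_mul (1/2 : ℝ))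
    simp only [add_zero, mul_zero] at this
    refine this.congr fun n => ?_
    simp [ha]
    ring
  have hmono : ∀ n, a (n+1) ≤ a n := by
    intro n
    have h1 := hxn n
    have h2 : (0:ℝ) < x + (n+1:ℕ) := hxn (n+1)
    simp only [ha]
    push_cast at h2 ⊢
    have e1 : 1/(x+(n+1:ℝ)) ≤ 1/(x+n) := by
      apply one_div_le_one_div_of_le h1; linarith
    have e2 : 1/(2*(x+(n+1:ℝ))^2) ≤ 1/(2*(x+n)^2) := by
      apply one_div_le_one_div_of_le (by positivity); nlinarith
    linarith
  have hpos : ∀ n, 0 ≤ a n := fun n => by have := hxn n; positivity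
  have key : ∀ n : ℕ, a n - a (n+1) ≤ 1/(x+n)^2 := by
    intro n
    have ht : (0:ℝ) < x + n := hxn n
    have ht1 : (0:ℝ) < x + (n:ℝ) + 1 := by linarith
    simp only [ha]
    push_cast
    rw [div_add_div _ _ (by positivity) (by positivity), div_add_div _ _ (by positivity) (by positivity),
      div_sub_div _ _ (by positivity) (by positivity), div_le_div_iff₀ (by positivity) (by positivity)]
    ring_nf
    nlinarith [sq_nonneg (x+(n:ℝ)), sq_nonneg ((x+(n:ℝ))*(x+(n:ℝ)+1)), mul_pos ht ht1]
  have hts := hasSum_telescope h0 hmono hpos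
  have : a 0 ≤ trig x := by
    rw [← hts.tsum_eq]
    exact Summable.tsum_le_tsum key hts.summable (summable_shift hx 2 one_lt_two)
  simpa [ha] using this






lemma tsum_le_telescope {f : ℕ → ℝ} {a : ℕ → ℝ} (h0 : Tendsto a atTop (𝓝 0))
    (hmono : ∀ n, a (n+1) ≤ a n) (hpos : ∀ n, 0 ≤ a n)
    (key : ∀ n, f n ≤ a n - a (n+1)) (hf : Summable f) : ∑' n, f n ≤ a 0 := by
  have hts := hasSum_telescope h0 hmono hpos
  rw [← hts.tsum_eq]
  exact Summable.tsum_le_tsum key hf hts.summable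

lemma tsum_ge_telescope {f : ℕ → ℝ} {a : ℕ → ℝ} (h0 : Tendsto a atTop (𝓝 0))
    (hmono : ∀ n, a (n+1) ≤ a n) (hpos : ∀ n, 0 ≤ a n)
    (key : ∀ n, a n - a (n+1) ≤ f n) (hf : Summable f) : a 0 ≤ ∑' n, f n := by
  have hts := hasSum_telescope h0 hmono hpos
  rw [← hts.tsum_eq]
  exact Summable.tsum_le_tsum key hts.summable hf

lemma cub_shift (hx : 0 < x) : cub x = 1/x^3 + cub (x+1) := by
  rw [cub, Summable.tsum_eq_zero_add (summable_shift hx 3 (by norm_num))]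
  congr 1
  · norm_num
  · rw [cub]; apply tsum_congr; intro n; push_cast; ring_nf

lemma trig_upper1 (hx : 0 < x) : trig (x+1) ≤ 1/x := by
  have hxn : ∀ n : ℕ, (0:ℝ) < x + n := fun n => by positivity
  have res : trig (x+1) ≤ (fun n : ℕ => 1/(x+n)) 0 := by
    rw [trig]
    have h0 : Tendsto (fun n : ℕ => 1/(x+(n:ℝ))) atTop (𝓝 0) := by
      simpa using tendsto_inv_pow_zero x 1 one_pos
    refine tsum_le_telescope h0
      (fun n => ?_) (fun n => by have := hxn n; positivity) (fun n => ?_)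
      (summable_shift (by linarith) 2 one_lt_two)
    · have h1 := hxn n; push_cast; apply one_div_le_one_div_of_le h1; linarith
    · have ht := hxn n
      have ht1 : (0:ℝ) < x + (n:ℝ) + 1 := by linarith
      push_cast
      rw [div_sub_div _ _ (by positivity) (by positivity),
        div_le_div_iff₀ (by positivity) (by positivity)]
      nlinarith
  simpa using res

lemma cub_upper1 (hx : 0 < x) : cub (x+1) ≤ 1/(2*x*(x+1)) := by
  have hxn : ∀ n : ℕ, (0:ℝ) < x + n := fun n => by positivity
  have res : cub (x+1) ≤ (fun n : ℕ => 1/(2*(x+n)*(x+n+1))) 0 := by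
    rw [cub]
    have h0 : Tendsto (fun n : ℕ => 1/(2*(x+(n:ℝ))*(x+n+1))) atTop (𝓝 0) := by
      refine squeeze_zero (fun n => by have := hxn n; positivity) (fun n => ?_)
        (tendsto_inv_pow_zero x 1 one_pos)
      have ht := hxn n
      apply one_div_le_one_div_of_le (by positivity)
      push_cast; nlinarith
    refine tsum_le_telescope h0 (fun n => ?_) (fun n => by have := hxn n; positivity)
      (fun n => ?_) (summable_shift (by linarith) 3 (by norm_num))
    · have h1 := hxn n
      apply one_div_le_one_div_of_le (by positivity)
      push_cast; nlinarith
    · have ht := hxn n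
      have ht1 : (0:ℝ) < x + (n:ℝ) + 1 := by linarith
      have ht2 : (0:ℝ) < x + (n:ℝ) + 2 := by linarith
      push_cast
      rw [div_sub_div _ _ (by positivity) (by positivity),
        div_le_div_iff₀ (by positivity) (by positivity)]
      nlinarith [sq_nonneg (x+(n:ℝ)+1), mul_pos ht ht1, mul_pos ht1 ht2]
  simpa using res

lemma cub_lower (hx : 0 < x) : 1/(2*x*(x+1)) ≤ cub x := by
  have hxn : ∀ n : ℕ, (0:ℝ) < x + n := fun n => by positivity
  have res : (fun n : ℕ => 1/(2*(x+n)*(x+n+1))) 0 ≤ cub x := by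
    rw [cub]
    have h0 : Tendsto (fun n : ℕ => 1/(2*(x+(n:ℝ))*(x+n+1))) atTop (𝓝 0) := by
      refine squeeze_zero (fun n => by have := hxn n; positivity) (fun n => ?_)
        (tendsto_inv_pow_zero x 1 one_pos)
      have ht := hxn n
      apply one_div_le_one_div_of_le (by positivity)
      push_cast; nlinarith
    refine tsum_ge_telescope h0 (fun n => ?_) (fun n => by have := hxn n; positivity)
      (fun n => ?_) (summable_shift hx 3 (by norm_num))
    · have h1 := hxn n
      apply one_div_le_one_div_of_le (by positivity)
      push_cast; nlinarith
    · have ht := hxn n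
      have ht1 : (0:ℝ) < x + (n:ℝ) + 1 := by linarith
      have ht2 : (0:ℝ) < x + (n:ℝ) + 2 := by linarith
      push_cast
      rw [div_sub_div _ _ (by positivity) (by positivity),
        div_le_div_iff₀ (by positivity) (by positivity)]
      nlinarith [mul_pos ht ht1, mul_pos ht1 ht2]
  simpa using res









lemma trig_pos (hx : 0 < x) : 0 < trig x :=
  lt_of_lt_of_le (by positivity) (trig_lower hx)

lemma cub_pos (hx : 0 < x) : 0 < cub x :=
  lt_of_lt_of_le (by positivity) (cub_lower hx)

lemma trig_upper (hx : 0 < x) : trig x ≤ 1/x^2 + 1/x := by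
  rw [trig_shift hx]; linarith [trig_upper1 hx]

lemma cub_upper (hx : 0 < x) : cub x ≤ 1/x^3 + 1/(2*x*(x+1)) := by
  rw [cub_shift hx]; linarith [cub_upper1 hx]

lemma F_step (hy : 0 < x) : (trig (x+1))^2 - 2*cub (x+1) ≤ (trig x)^2 - 2*cub x := by
  have hy1 : (0:ℝ) < x + 1 := by linarith
  have e1 := trig_shift hy
  have e2 := cub_shift hy
  have l1 := trig_lower hy
  have l2 := trig_lower hy1
  -- trig x + trig (x+1) ≥ 2/x
  have hsum : 2/x ≤ trig x + trig (x+1) := by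
    have key : 2/x ≤ (1/x + 1/(2*x^2)) + (1/(x+1) + 1/(2*(x+1)^2)) := by
      rw [div_add_div _ _ (by positivity) (by positivity),
        div_add_div _ _ (by positivity) (by positivity),
        div_add_div _ _ (by positivity) (by positivity),
        div_le_div_iff₀ (by positivity) (by positivity)]
      nlinarith [sq_nonneg (x+1-x), sq_nonneg x, sq_nonneg (x+1), mul_pos hy hy1]
    linarith
  have hx2 : (0:ℝ) < 1/x^2 := by positivity
  -- (trig x)^2 - (trig (x+1))^2 = (1/x^2) * (trig x + trig (x+1))
  have e3 : (trig x)^2 - (trig (x+1))^2 = (1/x^2) * (trig x + trig (x+1)) := by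
    rw [e1]; ring
  have e4 : 2*cub x - 2*cub (x+1) = 2/x^3 := by rw [e2]; ring
  have h5 : (1/x^2) * (2/x) ≤ (1/x^2) * (trig x + trig (x+1)) :=
    mul_le_mul_of_nonneg_left hsum (le_of_lt hx2)
  have h6 : (1/x^2) * (2/x) = 2/x^3 := by field_simp
  linarith

lemma F_le (hx : 0 < x) : ∀ n : ℕ, (trig (x+n))^2 - 2*cub (x+n) ≤ (trig x)^2 - 2*cub x := by
  intro n
  induction n with
  | zero => simp
  | succ n ih =>
    have hxn : (0:ℝ) < x + n := by positivity
    have e : x + ((n:ℝ)+1) = (x + n) + 1 := by ring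
    calc (trig (x+((n:ℕ)+1:ℕ)))^2 - 2*cub (x+((n:ℕ)+1:ℕ))
        = (trig ((x+n)+1))^2 - 2*cub ((x+n)+1) := by push_cast; rw [e]
      _ ≤ (trig (x+n))^2 - 2*cub (x+n) := F_step hxn
      _ ≤ _ := ih

lemma tendsto_trig_comp (hx : 0 < x) :
    Tendsto (fun n : ℕ => trig (x+n)) atTop (𝓝 0) := by
  have hxn : ∀ n : ℕ, (0:ℝ) < x + n := fun n => by positivity
  refine squeeze_zero (fun n => (trig_pos (hxn n)).le) (fun n => trig_upper (hxn n)) ?_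
  have h1 : Tendsto (fun n : ℕ => 1/(x+(n:ℝ))^2) atTop (𝓝 0) := tendsto_inv_pow_zero x 2 two_pos
  have h2 : Tendsto (fun n : ℕ => 1/(x+(n:ℝ))^1) atTop (𝓝 0) := tendsto_inv_pow_zero x 1 one_pos
  simpa using h1.add (h2.congr fun n => by norm_num)

lemma tendsto_cub_comp (hx : 0 < x) :
    Tendsto (fun n : ℕ => cub (x+n)) atTop (𝓝 0) := by
  have hxn : ∀ n : ℕ, (0:ℝ) < x + n := fun n => by positivity
  refine squeeze_zero (g := fun n : ℕ => 1/(x+(n:ℝ))^3 + 1/(2*(x+(n:ℝ))*(x+n+1)))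
    (fun n => (cub_pos (hxn n)).le) (fun n => cub_upper (hxn n)) ?_
  have h1 : Tendsto (fun n : ℕ => 1/(x+(n:ℝ))^3) atTop (𝓝 0) := tendsto_inv_pow_zero x 3 three_pos
  have h2 : Tendsto (fun n : ℕ => 1/(x+(n:ℝ))^2) atTop (𝓝 0) := tendsto_inv_pow_zero x 2 two_pos
  have h3 : Tendsto (fun n : ℕ => 1/(2*(x+(n:ℝ))*(x+n+1))) atTop (𝓝 0) := by
    refine squeeze_zero (fun n => by have := hxn n; positivity) (fun n => ?_) h2
    have ht := hxn n
    apply one_div_le_one_div_of_le (by positivity)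
    nlinarith
  simpa using h1.add h3

lemma key_ineq (hx : 0 < x) : 2 * cub x ≤ (trig x)^2 := by
  have htend : Tendsto (fun n : ℕ => (trig (x+n))^2 - 2*cub (x+n)) atTop (𝓝 0) := by
    have := ((tendsto_trig_comp hx).pow 2).sub ((tendsto_cub_comp hx).const_mul 2)
    simpa using this
  have := le_of_tendsto htend (Eventually.of_forall (F_le hx))
  linarith









lemma t_onediv : Tendsto (fun x : ℝ => 1/x) atTop (𝓝 0) := by
  simpa [one_div] using tendsto_inv_atTop_zero

lemma ratio_tendsto : Tendsto (fun x : ℝ => (trig x)^2/(2*cub x)) atTop (𝓝 1) := by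
  have hub : Tendsto (fun x : ℝ => (1/x^2+1/x)^2/(1/(x*(x+1)))) atTop (𝓝 1) := by
    have h1 : Tendsto (fun x : ℝ => (1+1/x)^3) atTop (𝓝 1) := by
      have := (tendsto_const_nhds (x := (1:ℝ)) (f := atTop)).add t_onediv
      simpa using this.pow 3
    refine h1.congr' ?_
    filter_upwards [eventually_gt_atTop (0:ℝ)] with x hx
    have hx1 : (0:ℝ) < x + 1 := by linarith
    field_simp
    ring
  have hlb : Tendsto (fun x : ℝ => (1/x^2)/(2/x^3 + 1/(x*(x+1)))) atTop (𝓝 1) := by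
    have hnum : Tendsto (fun x : ℝ => 1+1/x) atTop (𝓝 1) := by
      simpa using (tendsto_const_nhds (x := (1:ℝ)) (f := atTop)).add t_onediv
    have hden : Tendsto (fun x : ℝ => 1+2*(1/x)+2*(1/x)^2) atTop (𝓝 1) := by
      have := (tendsto_const_nhds (x := (1:ℝ)) (f := atTop)).add
        ((t_onediv.const_mul 2).add ((t_onediv.pow 2).const_mul 2))
      simpa [add_assoc] using this
    have h1 : Tendsto (fun x : ℝ => (1+1/x)/(1+2*(1/x)+2*(1/x)^2)) atTop (𝓝 1) := by
      have h := hnum.div hden (by norm_num); rw [div_one] at h; exact h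
    refine h1.congr' ?_
    filter_upwards [eventually_gt_atTop (0:ℝ)] with x hx
    have hx1 : (0:ℝ) < x + 1 := by linarith
    field_simp
    ring
  refine tendsto_of_tendsto_of_tendsto_of_le_of_le' hlb hub ?_ ?_
  · filter_upwards [eventually_gt_atTop (0:ℝ)] with x hx
    have hx1 : (0:ℝ) < x + 1 := by linarith
    refine div_le_div₀ (sq_nonneg _) ?_ (by have := cub_pos hx; linarith) ?_
    · have h := trig_lower hx
      have e : 1/x^2 = (1/x)^2 := by field_simp
      have h2 : 0 < 1/x := by positivity
      have h3 : 1/x ≤ trig x := by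
        have : (0:ℝ) ≤ 1/(2*x^2) := by positivity
        linarith
      calc 1/x^2 = (1/x)^2 := e
        _ ≤ (trig x)^2 := pow_le_pow_left₀ h2.le h3 2
    · have h := cub_upper hx
      have e : 2*(1/x^3 + 1/(2*x*(x+1))) = 2/x^3 + 1/(x*(x+1)) := by field_simp
      linarith
  · filter_upwards [eventually_gt_atTop (0:ℝ)] with x hx
    have hx1 : (0:ℝ) < x + 1 := by linarith
    refine div_le_div₀ (by positivity) ?_ (by positivity) ?_
    · have h := trig_upper hx
      have h2 := trig_pos hx
      nlinarith
    · have h := cub_lower hx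
      have e : 1/(x*(x+1)) = 2*(1/(2*x*(x+1))) := by field_simp
      linarith






lemma log_one_add_bounds {t : ℝ} (ht : 0 ≤ t) :
    t/(1+t) ≤ Real.log (1+t) ∧ Real.log (1+t) ≤ t := by
  have h1 : (0:ℝ) < 1 + t := by linarith
  constructor
  · have h2 := Real.log_le_sub_one_of_pos (x := (1+t)⁻¹) (by positivity)
    rw [Real.log_inv] at h2
    have e : (1+t)⁻¹ - 1 = -(t/(1+t)) := by field_simp; ring
    rw [e] at h2
    linarith
  · have := Real.log_le_sub_one_of_pos h1
    linarith

lemma wg_nonneg {x : ℝ} (hx : 0 ≤ x) (n : ℕ) : 0 ≤ wg n x := by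
  have hn : (0:ℝ) < (n:ℝ)+1 := by positivity
  have ht : 0 ≤ x/((n:ℝ)+1) := by positivity
  have := (log_one_add_bounds ht).2
  rw [wg]; linarith

lemma wg_le {x : ℝ} (hx : 0 ≤ x) (n : ℕ) : wg n x ≤ x^2 * (1/((n:ℝ)+1)^2) := by
  have hn : (0:ℝ) < (n:ℝ)+1 := by positivity
  set t := x/((n:ℝ)+1) with htdef
  have ht : 0 ≤ t := by positivity
  have h1 := (log_one_add_bounds ht).1
  have h2 : t - t/(1+t) ≤ t^2 := by
    have h3 : (0:ℝ) < 1 + t := by linarith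
    have e2 : t - t/(1+t) = t^2/(1+t) := by field_simp; ring
    rw [e2]
    exact div_le_self (sq_nonneg t) (by linarith)
  have e : t^2 = x^2 * (1/((n:ℝ)+1)^2) := by rw [htdef]; field_simp
  rw [wg]
  rw [← htdef] at *
  linarith

lemma summable_wg {x : ℝ} (hx : 0 ≤ x) : Summable (fun n => wg n x) :=
  Summable.of_nonneg_of_le (wg_nonneg hx) (wg_le hx) ((summable_base 2 one_lt_two).mul_left _)

lemma log_factorial (n : ℕ) :
    ∑ m ∈ Finset.range n, Real.log ((m:ℝ)+1) = Real.log (n.factorial : ℝ) := by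
  induction n with
  | zero => simp
  | succ n ih =>
    rw [Finset.sum_range_succ, ih, ← Real.log_mul (by positivity) (by positivity)]
    congr 1
    push_cast [Nat.factorial_succ]
    ring

lemma logGammaSeq_eq {x : ℝ} (hx : 0 < x) (n : ℕ) :
    Real.BohrMollerup.logGammaSeq x n =
      -Real.log x + x*(Real.log n - HH n) + ∑ m ∈ Finset.range n, wg m x := by
  rw [Real.BohrMollerup.logGammaSeq]
  have e0 : ∑ m ∈ Finset.range (n+1), Real.log (x+m)
      = (∑ m ∈ Finset.range n, Real.log (x+(m+1:ℕ))) + Real.log x := by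
    rw [Finset.sum_range_succ' (fun m => Real.log (x+m)) n]
    norm_num
  have e1 : ∀ m ∈ Finset.range n, Real.log (x+(m+1:ℕ))
      = Real.log ((m:ℝ)+1) + (x/((m:ℝ)+1) - wg m x) := by
    intro m _
    have hm : (0:ℝ) < (m:ℝ)+1 := by positivity
    have hq : (0:ℝ) < 1 + x/((m:ℝ)+1) := by positivity
    have e : x + ((m:ℕ)+1:ℕ) = ((m:ℝ)+1) * (1 + x/((m:ℝ)+1)) := by
      push_cast; field_simp; ring
    rw [e, Real.log_mul hm.ne' hq.ne', wg]
    ring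
  rw [e0, Finset.sum_congr rfl e1]
  simp only [Finset.sum_add_distrib, Finset.sum_sub_distrib, log_factorial]
  have e2 : ∑ m ∈ Finset.range n, x/((m:ℝ)+1) = x * HH n := by
    rw [HH, Finset.mul_sum]
    apply Finset.sum_congr rfl
    intro m _
    ring
  rw [e2]
  ring

lemma tendsto_logH : Tendsto (fun n : ℕ => Real.log n - HH n) atTop (𝓝 (-cc)) := by
  have h1 := Real.BohrMollerup.tendsto_log_gamma one_pos
  rw [Real.Gamma_one, Real.log_one] at h1
  have h2 : Tendsto (fun n : ℕ => ∑ m ∈ Finset.range n, wg m 1) atTop (𝓝 cc) :=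
    (summable_wg zero_le_one).hasSum.tendsto_sum_nat
  have h3 := h1.sub h2
  rw [zero_sub] at h3
  refine h3.congr fun n => ?_
  rw [logGammaSeq_eq one_pos n]
  simp

lemma weierstrass {x : ℝ} (hx : 0 < x) :
    Real.log (Real.Gamma x) = -Real.log x - cc*x + WW x := by
  have h1 := Real.BohrMollerup.tendsto_log_gamma hx
  have h2 : Tendsto (fun n : ℕ => -Real.log x + x*(Real.log n - HH n)
      + ∑ m ∈ Finset.range n, wg m x) atTop (𝓝 (-Real.log x + x*(-cc) + WW x)) :=
    (tendsto_const_nhds.add (tendsto_logH.const_mul x)).add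
      (summable_wg hx.le).hasSum.tendsto_sum_nat
  have h3 := h2.congr fun n => (logGammaSeq_eq hx n).symm
  have := tendsto_nhds_unique h1 h3
  rw [this]; ring












lemma summable_hW_term (hx : 0 < x) :
    Summable (fun n : ℕ => 1/((n:ℝ)+1) - 1/(x+n+1)) := by
  refine Summable.of_nonneg_of_le (fun n => ?_) (fun n => ?_)
    ((summable_base 2 one_lt_two).mul_left x)
  · have h1 : (0:ℝ) < (n:ℝ)+1 := by positivity
    have h2 : (0:ℝ) < x+n+1 := by positivity
    have := one_div_le_one_div_of_le h1 (by linarith : (n:ℝ)+1 ≤ x+n+1)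
    linarith
  · have h1 : (0:ℝ) < (n:ℝ)+1 := by positivity
    have h2 : (0:ℝ) < x+n+1 := by positivity
    have e : 1/((n:ℝ)+1) - 1/(x+n+1) = x/(((n:ℝ)+1)*(x+n+1)) := by
      rw [div_sub_div _ _ h1.ne' h2.ne']
      congr 1
      ring
    rw [e]
    rw [div_le_iff₀ (by positivity)]
    have e2 : x * (1/((n:ℝ)+1)^2) * (((n:ℝ)+1)*(x+n+1)) = x * ((x+n+1)/((n:ℝ)+1)) := by
      field_simp
    rw [e2]
    have h3 : (1:ℝ) ≤ (x+n+1)/((n:ℝ)+1) := by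
      rw [le_div_iff₀ h1]; linarith
    nlinarith

lemma hasDerivAt_WW (hx : 0 < x) : HasDerivAt WW (hW x) x := by
  have key : HasDerivAt (fun z => ∑' n : ℕ, wg n z)
      (∑' n : ℕ, (1/((n:ℝ)+1) - 1/(x+n+1))) x := by
    refine hasDerivAt_tsum_of_isPreconnected
      (u := fun n : ℕ => (x+1) * (1/((n:ℝ)+1)^2))
      (g' := fun (n : ℕ) (y : ℝ) => 1/((n:ℝ)+1) - 1/(y+(n:ℝ)+1))
      ((summable_base 2 one_lt_two).mul_left _) isOpen_Ioo
      (convex_Ioo (0:ℝ) (x+1)).isPreconnected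
      (fun n y hy => ?_) (fun n y hy => ?_)
      (Set.mem_Ioo.2 ⟨hx, by linarith⟩) (summable_wg hx.le)
      (Set.mem_Ioo.2 ⟨hx, by linarith⟩)
    · have hn : (0:ℝ) < (n:ℝ)+1 := by positivity
      have hy0 : 0 < y := hy.1
      have hq : (0:ℝ) < 1 + y/((n:ℝ)+1) := by positivity
      have hinner : HasDerivAt (fun z : ℝ => 1 + z/((n:ℝ)+1)) (1/((n:ℝ)+1)) y := by
        simpa using ((hasDerivAt_id y).div_const ((n:ℝ)+1)).const_add 1
      have hlog := hinner.log hq.ne'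
      have hlin : HasDerivAt (fun z : ℝ => z/((n:ℝ)+1)) (1/((n:ℝ)+1)) y := by
        simpa using (hasDerivAt_id y).div_const ((n:ℝ)+1)
      have e3 : (1/((n:ℝ)+1)) / (1 + y/((n:ℝ)+1)) = 1/(y+(n:ℝ)+1) := by
        rw [div_div]
        congr 1
        field_simp
        ring
      have h4 := hlin.sub hlog
      rw [e3] at h4
      exact h4
    · have hn : (0:ℝ) < (n:ℝ)+1 := by positivity
      have hy0 : 0 < y := hy.1
      have hy1 : y < x + 1 := hy.2
      have h2 : (0:ℝ) < y+n+1 := by positivity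
      have e : 1/((n:ℝ)+1) - 1/(y+n+1) = y/(((n:ℝ)+1)*(y+n+1)) := by
        rw [div_sub_div _ _ hn.ne' h2.ne']
        congr 1
        ring
      show ‖1/((n:ℝ)+1) - 1/(y+n+1)‖ ≤ (x+1) * (1/((n:ℝ)+1)^2)
      rw [Real.norm_eq_abs, e, abs_of_nonneg (by positivity)]
      rw [div_le_iff₀ (by positivity)]
      have e2 : (x+1) * (1/((n:ℝ)+1)^2) * (((n:ℝ)+1)*(y+n+1)) = (x+1) * ((y+n+1)/((n:ℝ)+1)) := by
        field_simp
      rw [e2]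
      have h3 : (1:ℝ) ≤ (y+n+1)/((n:ℝ)+1) := by
        rw [le_div_iff₀ hn]; linarith
      nlinarith
  exact key

lemma hasDerivAt_hW (hx : 0 < x) : HasDerivAt hW (trig (x+1)) x := by
  have hx2 : (0:ℝ) < x/2 := by linarith
  have key : HasDerivAt (fun z : ℝ => ∑' n : ℕ, (1/((n:ℝ)+1) - 1/(z+(n:ℝ)+1)))
      (∑' n : ℕ, 1/(x+(n:ℝ)+1)^2) x := by
    refine hasDerivAt_tsum_of_isPreconnected
      (u := fun n : ℕ => 1/((x/2+1)+(n:ℝ))^2)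
      (g' := fun (n : ℕ) (y : ℝ) => 1/(y+(n:ℝ)+1)^2)
      (summable_shift (by linarith : (0:ℝ) < x/2+1) 2 one_lt_two) isOpen_Ioo
      (convex_Ioo (x/2) (x+1)).isPreconnected
      (fun n y hy => ?_) (fun n y hy => ?_)
      (Set.mem_Ioo.2 ⟨by linarith, by linarith⟩) (summable_hW_term hx)
      (Set.mem_Ioo.2 ⟨by linarith, by linarith⟩)
    · have hy0 : x/2 < y := hy.1
      have hn0 : (0:ℝ) ≤ n := Nat.cast_nonneg n
      have h2 : (0:ℝ) < y+n+1 := by linarith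
      have hlin : HasDerivAt (fun z : ℝ => z+(n:ℝ)+1) 1 y := by
        simpa [add_assoc] using (hasDerivAt_id y).add_const ((n:ℝ)+1)
      have h4 := (hlin.inv h2.ne').const_sub (1/((n:ℝ)+1))
      have e3 : -(1/(y+(n:ℝ)+1)^2) = -1/(y+(n:ℝ)+1)^2 := by ring
      show HasDerivAt (fun y : ℝ => 1/((n:ℝ)+1) - 1/(y+(n:ℝ)+1)) (1/(y+(n:ℝ)+1)^2) y
      simpa [one_div, neg_div, neg_neg] using h4
    · have hy0 : x/2 < y := hy.1
      have hn0 : (0:ℝ) ≤ n := Nat.cast_nonneg n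
      have h2 : (0:ℝ) < y+n+1 := by linarith
      have h3 : (0:ℝ) < (x/2+1)+(n:ℝ) := by linarith
      show ‖1/(y+(n:ℝ)+1)^2‖ ≤ 1/((x/2+1)+(n:ℝ))^2
      rw [Real.norm_eq_abs, abs_of_nonneg (by positivity)]
      exact one_div_le_one_div_of_le (pow_pos h3 2) (pow_le_pow_left₀ h3.le (by linarith) 2)
  have e : ∑' n : ℕ, 1/(x+n+1)^2 = trig (x+1) := by
    rw [trig]; apply tsum_congr; intro n; ring_nf
  rw [e] at key
  exact key

lemma hasDerivAt_trig (hx : 0 < x) : HasDerivAt trig (-2 * cub x) x := by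
  have hx2 : (0:ℝ) < x/2 := by linarith
  have key : HasDerivAt (fun z : ℝ => ∑' n : ℕ, 1/(z+(n:ℝ))^2)
      (∑' n : ℕ, -2/(x+(n:ℝ))^3) x := by
    refine hasDerivAt_tsum_of_isPreconnected
      (u := fun n : ℕ => 2 * (1/(x/2+(n:ℝ))^3))
      (g' := fun (n : ℕ) (y : ℝ) => -2/(y+(n:ℝ))^3)
      ((summable_shift hx2 3 (by norm_num)).mul_left 2) isOpen_Ioo
      (convex_Ioo (x/2) (x+1)).isPreconnected
      (fun n y hy => ?_) (fun n y hy => ?_)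
      (Set.mem_Ioo.2 ⟨by linarith, by linarith⟩) (summable_shift hx 2 one_lt_two)
      (Set.mem_Ioo.2 ⟨by linarith, by linarith⟩)
    · have hy0 : x/2 < y := hy.1
      have hn0 : (0:ℝ) ≤ n := Nat.cast_nonneg n
      have h2 : (0:ℝ) < y+n := by linarith
      have hlin : HasDerivAt (fun z : ℝ => z+n) 1 y := by
        simpa using (hasDerivAt_id y).add_const ((n:ℝ))
      have hpow : HasDerivAt (fun z : ℝ => (z+(n:ℝ))^2) (2*(y+n)) y := by
        exact (hlin.pow 2).congr_deriv (by norm_num)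
      have h4 := hpow.inv (by positivity : ((y+(n:ℝ))^2) ≠ 0)
      have h5 : HasDerivAt (fun z : ℝ => 1/(z+(n:ℝ))^2) (-(2*(y+(n:ℝ)))/((y+(n:ℝ))^2)^2) y := by
        simp only [one_div]; exact h4
      have e3 : -(2*(y+(n:ℝ)))/((y+(n:ℝ))^2)^2 = -2/(y+(n:ℝ))^3 := by
        rw [div_eq_div_iff (pow_pos (pow_pos h2 2) 2).ne' (pow_pos h2 3).ne']
        ring
      rw [e3] at h5
      exact h5
    · have hy0 : x/2 < y := hy.1
      have hn0 : (0:ℝ) ≤ n := Nat.cast_nonneg n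
      have h2 : (0:ℝ) < y+n := by linarith
      have h3 : (0:ℝ) < x/2+n := by linarith
      show ‖-2/(y+(n:ℝ))^3‖ ≤ 2 * (1/(x/2+(n:ℝ))^3)
      have e : ‖-2/(y+(n:ℝ))^3‖ = 2/(y+(n:ℝ))^3 := by
        rw [Real.norm_eq_abs, abs_div, abs_of_nonneg (pow_pos h2 3).le]
        norm_num
      rw [e]
      have h5 : (1:ℝ)/(y+n)^3 ≤ 1/(x/2+n)^3 :=
        one_div_le_one_div_of_le (pow_pos h3 3) (pow_le_pow_left₀ h3.le (by linarith) 3)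
      calc (2:ℝ)/(y+n)^3 = 2 * (1/(y+n)^3) := by ring
        _ ≤ 2 * (1/(x/2+n)^3) := by linarith
  have e : ∑' n : ℕ, -2/(x+n)^3 = -2 * cub x := by
    rw [cub, ← tsum_mul_left]
    apply tsum_congr; intro n; ring
  rw [e] at key
  exact key

lemma psi_eq (hx : 0 < x) : psi x = -(1/x) - cc + hW x := by
  have hlog : HasDerivAt (fun y : ℝ => -Real.log y) (-(1/x)) x := by
    exact (Real.hasDerivAt_log hx.ne').neg.congr_deriv (by rw [one_div])
  have hlin : HasDerivAt (fun y : ℝ => cc*y) cc x := by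
    simpa using (hasDerivAt_id x).const_mul cc
  have hD : HasDerivAt (fun y => -Real.log y - cc*y + WW y) (-(1/x) - cc + hW x) x :=
    (hlog.sub hlin).add (hasDerivAt_WW hx)
  have hEq : (fun y => Real.log (Real.Gamma y)) =ᶠ[𝓝 x] (fun y => -Real.log y - cc*y + WW y) :=
    Filter.eventuallyEq_of_mem (Ioi_mem_nhds hx) fun y hy => weierstrass hy
  have hG : HasDerivAt (fun y => Real.log (Real.Gamma y)) (-(1/x) - cc + hW x) x :=
    hD.congr_of_eventuallyEq hEq
  rw [psi]
  exact hG.deriv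

lemma deriv_psi (hx : 0 < x) : deriv psi x = trig x := by
  have hEv : psi =ᶠ[𝓝 x] (fun y => -(1/y) - cc + hW y) :=
    Filter.eventuallyEq_of_mem (Ioi_mem_nhds hx) fun y hy => psi_eq hy
  have hinv : HasDerivAt (fun y : ℝ => -(1/y)) ((x^2)⁻¹) x := by
    simp only [one_div]; exact (hasDerivAt_inv hx.ne').neg.congr_deriv (neg_neg _)
  have hD : HasDerivAt (fun y => -(1/y) - cc + hW y) ((x^2)⁻¹ + trig (x+1)) x :=
    (hinv.sub_const cc).add (hasDerivAt_hW hx)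
  rw [hEv.deriv_eq, hD.deriv, trig_shift hx, one_div]

lemma deriv2_psi (hx : 0 < x) : deriv (deriv psi) x = -2 * cub x := by
  have hEv : deriv psi =ᶠ[𝓝 x] trig :=
    Filter.eventuallyEq_of_mem (Ioi_mem_nhds hx) fun y hy => deriv_psi hy
  rw [hEv.deriv_eq, (hasDerivAt_trig hx).deriv]
end TG

open TG in
theorem trigamma_sq_tetragamma_ratio (lam : ℝ) :
    ((∀ x : ℝ, 0 < x → 0 ≤ (deriv psi x) ^ 2 + lam * deriv (deriv psi) x) ↔ lam ≤ 1) ∧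
    Tendsto (fun x : ℝ => -(deriv psi x) ^ 2 / deriv (deriv psi) x) atTop (nhds 1) := by
  have hratio : ∀ x : ℝ, 0 < x →
      -(deriv psi x) ^ 2 / deriv (deriv psi) x = (trig x)^2/(2*cub x) := by
    intro x hx
    rw [deriv_psi hx, deriv2_psi hx,
      show (-2:ℝ)*cub x = -(2*cub x) by ring, div_neg, neg_div, neg_neg]
  have hmain : Tendsto (fun x : ℝ => -(deriv psi x) ^ 2 / deriv (deriv psi) x) atTop (nhds 1) := by
    refine ratio_tendsto.congr' ?_
    filter_upwards [eventually_gt_atTop (0:ℝ)] with x hx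
    exact (hratio x hx).symm
  refine ⟨⟨?_, ?_⟩, hmain⟩
  · intro h
    by_contra hl
    push_neg at hl
    have hev : ∀ᶠ x : ℝ in atTop, -(deriv psi x) ^ 2 / deriv (deriv psi) x < lam :=
      hmain.eventually_lt_const hl
    obtain ⟨x, hx1, hx2⟩ := (hev.and (eventually_gt_atTop (0:ℝ))).exists
    have h1 := h x hx2
    rw [deriv_psi hx2, deriv2_psi hx2] at h1
    rw [hratio x hx2] at hx1
    have hc := cub_pos hx2
    rw [div_lt_iff₀ (by linarith)] at hx1
    nlinarith
  · intro hlam x hx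
    rw [deriv_psi hx, deriv2_psi hx]
    have hk := key_ineq hx
    have hc := cub_pos hx
    nlinarith
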